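/- arXiv:1109.2833 — 2 statements merged into one kernel-verified Lean document; each statement's English description precedes it below -/
import Mathlib

section
/- Suppose $\Upsilon(\beta) := \frac{1}{4\pi^2}\sum_{n=-\infty}^{\infty} \frac{1}{\beta + 2\Re\varPhi(n)}$ is finite for all $\beta > 0$. Then for every $t > 0$, $\sum_{n=-\infty}^{\infty} e^{-2t\Re\varPhi(n)} < \infty$. -/
/-- If `Υ(β) = (1/4π²) ∑_{n ∈ ℤ} 1/(β + 2 Re Φ(n))` is finite (the series is summable)
for all `β > 0`, then for every `t > 0` the series `∑_{n ∈ ℤ} e^{-2t Re Φ(n)}` converges. -/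
theorem summable_exp_of_upsilon_finite (Φ : ℤ → ℂ)
    (hRe : ∀ n : ℤ, 0 ≤ (Φ n).re)
    (hΥ : ∀ β : ℝ, 0 < β → Summable fun n : ℤ => 1 / (β + 2 * (Φ n).re)) :
    ∀ t : ℝ, 0 < t → Summable fun n : ℤ => Real.exp (-2 * t * (Φ n).re) := by
  intro t ht
  have hsum := ((hΥ (1/t) (by positivity)).mul_left (1/t))
  refine Summable.of_nonneg_of_le (fun n => (Real.exp_pos _).le) (fun n => ?_) hsum
  have hx := hRe n
  set x := (Φ n).re
  have hden : 0 < 1/t + 2 * x := by positivity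
  have key : 1 + 2 * t * x ≤ Real.exp (2 * t * x) := by
    have := Real.add_one_le_exp (2 * t * x); linarith
  have h1 : 0 < 1 + 2 * t * x := by positivity
  rw [show (-2 : ℝ) * t * x = -(2 * t * x) by ring, Real.exp_neg]
  have h2 : (1:ℝ) / (1 + 2 * t * x) = 1/t * (1 / (1/t + 2 * x)) := by
    field_simp
  calc (Real.exp (2 * t * x))⁻¹ ≤ (1 + 2 * t * x)⁻¹ := by
        exact inv_anti₀ h1 key
    _ = 1/t * (1 / (1/t + 2 * x)) := by rw [← one_div]; exact h2
end

section
/- Suppose there are $1 < \alpha \le \beta \le 2$ and $0 < C_1 < C_2$ such that $C_1|n|^\alpha \le \Re\varPhi(n) \le C_2|n|^\beta$ for all integers $n$ with $|n|\ge1$. Then for every $T>0$ there exist constants $0 < A_1 < A_2$ (depending on $T$) such that $A_1 t^{-1/\beta} \le \|q_t\|_{L^2(\mathbf{T})}^2 \le A_2 t^{-1/\alpha}$ for all $t \in (0,T)$. -/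
open Real

set_option maxHeartbeats 2000000 in
/-- Under the two-sided bound `C₁|n|^α ≤ Re Φ(n) ≤ C₂|n|^β` (`1 < α ≤ β ≤ 2`,
`0 < C₁ < C₂`) for `|n| ≥ 1`, for every `T > 0` there are constants `0 < A₁ < A₂`
(depending on `T`) with `A₁ t^{-1/β} ≤ ‖q_t‖²_{L²(T)} ≤ A₂ t^{-1/α}` for `t ∈ (0,T)`,
where `‖q_t‖²_{L²(T)} = (1/4π²) ∑_{n ∈ ℤ} e^{-2t Re Φ(n)}`. -/
theorem L2norm_transition_density_bounds (Φ : ℤ → ℂ) (α β C₁ C₂ : ℝ)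
    (hα : 1 < α) (hαβ : α ≤ β) (hβ : β ≤ 2) (hC₁ : 0 < C₁) (hC₁₂ : C₁ < C₂)
    (hbound : ∀ n : ℤ, 1 ≤ |n| →
      C₁ * |(n : ℝ)| ^ α ≤ (Φ n).re ∧ (Φ n).re ≤ C₂ * |(n : ℝ)| ^ β)
    (hRe0 : 0 ≤ (Φ 0).re)
    (Q : ℝ → ℝ)
    (hQ : ∀ t : ℝ, 0 < t →
      Q t = (1 / (4 * Real.pi ^ 2)) * ∑' n : ℤ, Real.exp (-2 * t * (Φ n).re)) :
    ∀ T : ℝ, 0 < T → ∃ A₁ A₂ : ℝ, 0 < A₁ ∧ A₁ < A₂ ∧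
      ∀ t ∈ Set.Ioo (0:ℝ) T,
        A₁ * t ^ (-(1 / β)) ≤ Q t ∧ Q t ≤ A₂ * t ^ (-(1 / α)) := by
  intro T hT
  have hα0 : (0:ℝ) < α := lt_trans one_pos hα
  have hβ0 : (0:ℝ) < β := lt_of_lt_of_le hα0 hαβ
  have hC₂ : 0 < C₂ := hC₁.trans hC₁₂
  have hπ : (0:ℝ) < 1 / (4 * Real.pi ^ 2) := by positivity
  set Λ : ℝ := (2*T*C₁) ^ (1/α) with hΛdef
  clear_value Λ
  have hΛpos : 0 < Λ := by rw [hΛdef]; exact Real.rpow_pos_of_pos (by positivity) _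
  set M : ℝ := max 1 (2*T*C₂) with hMdef
  clear_value M
  set c₁ : ℝ := (1/(4*Real.pi^2)) * ((2*C₂)^(-(1/β)) * Real.exp (-M) / 2) with hc₁def
  clear_value c₁
  set c₂ : ℝ := (1/(4*Real.pi^2)) * (2 * ((2*Λ + 1 + Real.exp Λ) * (2*C₁)^(-(1/α)))) with hc₂def
  clear_value c₂
  have hc₁ : 0 < c₁ := by
    rw [hc₁def]
    have : (0:ℝ) < (2*C₂)^(-(1/β)) := Real.rpow_pos_of_pos (by positivity) _
    positivity
  have hc₂ : 0 < c₂ := by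
    rw [hc₂def]
    have h1 : (0:ℝ) < (2*C₁)^(-(1/α)) := Real.rpow_pos_of_pos (by positivity) _
    have h2 : (0:ℝ) < 2*Λ + 1 + Real.exp Λ := by positivity
    positivity
  refine ⟨c₁, c₁ + c₂, hc₁, by linarith, ?_⟩
  rintro t ⟨ht0, htT⟩
  set f : ℤ → ℝ := fun n => Real.exp (-2 * t * (Φ n).re) with hfdef
  have hfpos : ∀ n, 0 < f n := fun n => Real.exp_pos _
  -- basic facts about Re Φ
  have hRe_nonneg : ∀ n : ℤ, 0 ≤ (Φ n).re := by
    intro n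
    rcases eq_or_ne n 0 with rfl | hn
    · exact hRe0
    · have h1 : (1:ℤ) ≤ |n| := Int.one_le_abs hn
      refine le_trans ?_ (hbound n h1).1
      have : (0:ℝ) < |(n:ℝ)| ^ α := Real.rpow_pos_of_pos (by
        simpa using (by exact_mod_cast (abs_pos.mpr hn) : (0:ℝ) < |(n:ℝ)|)) _
      positivity
  have hf_le_one : ∀ n, f n ≤ 1 := by
    intro n
    rw [hfdef]
    simp only
    rw [Real.exp_le_one_iff]
    have := hRe_nonneg n
    nlinarith
  -- λ for upper bound
  set lam : ℝ := (2*t*C₁) ^ (1/α) with hlamdef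
  clear_value lam
  have hlam : 0 < lam := by rw [hlamdef]; exact Real.rpow_pos_of_pos (by positivity) _
  set N : ℕ := ⌈1/lam⌉₊ with hNdef
  clear_value N
  set r : ℝ := Real.exp (-lam) with hrdef
  clear_value r
  have hr0 : 0 ≤ r := by rw [hrdef]; exact le_of_lt (Real.exp_pos _)
  have hr1 : r < 1 := by rw [hrdef]; exact Real.exp_lt_one_iff.mpr (by linarith)
  set g : ℤ → ℝ := fun n => (if n.natAbs ≤ N then (1:ℝ) else 0) + r ^ n.natAbs with hgdef
  -- termwise upper bound
  have hfg : ∀ n : ℤ, f n ≤ g n := by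
    intro n
    rw [hgdef]
    simp only
    by_cases hn : n.natAbs ≤ N
    · rw [if_pos hn]
      have := pow_nonneg hr0 n.natAbs
      have := hf_le_one n
      linarith
    · rw [if_neg hn, zero_add]
      push_neg at hn
      have hn1 : 1 ≤ n.natAbs := by omega
      have hne : n ≠ 0 := by omega
      have habs : |(n:ℝ)| = (n.natAbs : ℝ) := by
        rw [← Int.cast_abs, Int.abs_eq_natAbs, Int.cast_natCast]
      have hNlam : 1 ≤ lam * (n.natAbs : ℝ) := by
        have h1 : (1:ℝ)/lam ≤ (N:ℝ) := by rw [hNdef]; exact Nat.le_ceil _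
        have h2 : (N:ℝ) + 1 ≤ (n.natAbs:ℝ) := by exact_mod_cast hn
        have := mul_le_mul_of_nonneg_left (le_trans (by linarith) h2) hlam.le
        rw [mul_div_cancel₀] at this
        · linarith
        · exact ne_of_gt hlam
      have hbase : (0:ℝ) ≤ |(n:ℝ)| := abs_nonneg _
      have key : lam * (n.natAbs:ℝ) ≤ 2*t*(Φ n).re := by
        have hb := (hbound n (Int.one_le_abs hne)).1
        have hpow : lam * (n.natAbs:ℝ) ≤ (lam * |(n:ℝ)|) ^ α := by
          rw [habs] at *
          calc lam * (n.natAbs:ℝ) = (lam * (n.natAbs:ℝ)) ^ (1:ℝ) := by rw [Real.rpow_one]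
            _ ≤ (lam * (n.natAbs:ℝ)) ^ α := Real.rpow_le_rpow_of_exponent_le hNlam hα.le
        have heq : (lam * |(n:ℝ)|) ^ α = 2*t*C₁ * |(n:ℝ)| ^ α := by
          rw [Real.mul_rpow hlam.le hbase, hlamdef,
            ← Real.rpow_mul (by positivity : (0:ℝ) ≤ 2*t*C₁),
            one_div_mul_cancel (ne_of_gt hα0), Real.rpow_one]
        calc lam * (n.natAbs:ℝ) ≤ (lam * |(n:ℝ)|) ^ α := hpow
          _ = 2*t*C₁ * |(n:ℝ)| ^ α := heq
          _ = 2*t*(C₁ * |(n:ℝ)| ^ α) := by ring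
          _ ≤ 2*t*(Φ n).re := by nlinarith
      calc f n = Real.exp (-(2*t*(Φ n).re)) := by rw [hfdef]; ring_nf
        _ ≤ Real.exp (-(lam * (n.natAbs:ℝ))) := Real.exp_le_exp.mpr (by linarith)
        _ = r ^ n.natAbs := by
            rw [hrdef, ← Real.exp_nat_mul]; ring_nf
  -- summability
  have hgeo_nat : Summable (fun m : ℕ => r ^ m) := summable_geometric_of_lt_one hr0 hr1
  have hind_sum : Summable (fun n : ℤ => (if n.natAbs ≤ N then (1:ℝ) else 0)) := by
    apply summable_of_ne_finset_zero (s := Finset.Icc (-(N:ℤ)) (N:ℤ))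
    intro n hn
    rw [if_neg]
    intro h
    exact hn (Finset.mem_Icc.mpr ⟨by omega, by omega⟩)
  have hgeo_int : Summable (fun n : ℤ => r ^ n.natAbs) := by
    apply Summable.of_nat_of_neg
    · simpa using hgeo_nat
    · simpa using hgeo_nat
  have hg_sum : Summable g := hind_sum.add hgeo_int
  have hf_sum : Summable f := Summable.of_nonneg_of_le (fun n => (hfpos n).le) hfg hg_sum
  -- upper bound for tsum g
  have hgnat_sum : Summable (fun m : ℕ => g (m:ℤ)) := by
    have := hg_sum.comp_injective (fun a b h => by exact_mod_cast h : Function.Injective ((↑) : ℕ → ℤ))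
    exact this
  have hgneg_sum : Summable (fun m : ℕ => g (-(m+1) : ℤ)) := by
    have : Function.Injective (fun m : ℕ => (-(m+1) : ℤ)) := by
      intro a b h; dsimp at h; omega
    exact hg_sum.comp_injective this
  have htsum_ind : ∑' m : ℕ, (if m ≤ N then (1:ℝ) else 0) = N + 1 := by
    rw [tsum_eq_sum (s := Finset.range (N+1)) (by
      intro m hm; simp only [Finset.mem_range] at hm; rw [if_neg (by omega)])]
    rw [Finset.sum_congr rfl (fun m hm => if_pos (by simp only [Finset.mem_range] at hm; omega))]
    simp
  have hind_nat : Summable (fun m : ℕ => (if m ≤ N then (1:ℝ) else 0)) := by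
    apply summable_of_ne_finset_zero (s := Finset.range (N+1))
    intro m hm; simp only [Finset.mem_range] at hm; rw [if_neg (by omega)]
  have hSnat : ∑' m : ℕ, g (m:ℤ) = (N + 1 : ℝ) + (1-r)⁻¹ := by
    have : (fun m : ℕ => g (m:ℤ)) = fun m : ℕ => (if m ≤ N then (1:ℝ) else 0) + r ^ m := by
      funext m; rw [hgdef]; simp
    rw [this, Summable.tsum_add hind_nat hgeo_nat, htsum_ind, tsum_geometric_of_lt_one hr0 hr1]
  have hSneg_le : ∑' m : ℕ, g (-(m+1) : ℤ) ≤ ∑' m : ℕ, g (m:ℤ) := by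
    apply Summable.tsum_le_tsum _ hgneg_sum hgnat_sum
    intro m
    have h1 : ((-((m:ℤ)+1))).natAbs = m + 1 := by omega
    rw [hgdef]
    simp only [h1, Int.natAbs_natCast]
    have hind_le : (if m+1 ≤ N then (1:ℝ) else 0) ≤ (if m ≤ N then (1:ℝ) else 0) := by
      split_ifs with ha hb <;> norm_num <;> omega
    have hgeom_le : r ^ (m+1) ≤ r ^ m := pow_le_pow_of_le_one hr0 hr1.le (Nat.le_succ m)
    exact add_le_add hind_le hgeom_le
  have htsum_f_le : ∑' n : ℤ, f n ≤ 2 * ((N+1:ℝ) + (1-r)⁻¹) := by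
    calc ∑' n : ℤ, f n ≤ ∑' n : ℤ, g n := Summable.tsum_le_tsum hfg hf_sum hg_sum
      _ = (∑' m : ℕ, g (m:ℤ)) + ∑' m : ℕ, g (-(m+1):ℤ) := tsum_of_nat_of_neg_add_one hgnat_sum hgneg_sum
      _ ≤ (∑' m : ℕ, g (m:ℤ)) + ∑' m : ℕ, g (m:ℤ) := by linarith [hSneg_le]
      _ = 2 * ((N+1:ℝ) + (1-r)⁻¹) := by rw [hSnat]; ring
  -- numeric upper estimate
  have hlamΛ : lam ≤ Λ := by
    rw [hlamdef, hΛdef]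
    exact Real.rpow_le_rpow (by positivity) (by nlinarith) (by positivity)
  have hN_le : (N:ℝ) < 1/lam + 1 := by rw [hNdef]; exact Nat.ceil_lt_add_one (by positivity)
  have h1r : lam * r ≤ 1 - r := by
    have h := Real.add_one_le_exp lam
    have hr' : Real.exp lam * r = 1 := by rw [hrdef, ← Real.exp_add]; simp
    have hmul : (lam + 1) * r ≤ Real.exp lam * r := mul_le_mul_of_nonneg_right h hr0
    rw [hr'] at hmul
    have hexpand : (lam + 1) * r = lam * r + r := by ring
    linarith
  have hinv : (1-r)⁻¹ ≤ Real.exp Λ / lam := by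
    have hrpos : 0 < r := by rw [hrdef]; exact Real.exp_pos _
    have h2 : 0 < lam * r := mul_pos hlam hrpos
    have h3 : (1-r)⁻¹ ≤ (lam * r)⁻¹ := inv_anti₀ h2 h1r
    have h4 : (lam * r)⁻¹ = Real.exp lam / lam := by
      rw [hrdef, mul_inv, Real.exp_neg, inv_inv]
      ring
    have h5 : Real.exp lam / lam ≤ Real.exp Λ / lam := by
      gcongr
    calc (1-r)⁻¹ ≤ (lam*r)⁻¹ := h3
      _ = Real.exp lam / lam := h4
      _ ≤ Real.exp Λ / lam := h5
  have hmain_upper : ∑' n : ℤ, f n ≤ 2 * ((2*Λ + 1 + Real.exp Λ) * (1/lam)) := by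
    have e1 : (2:ℝ) ≤ 2*Λ/lam := by rw [le_div_iff₀ hlam]; linarith
    have e2 : (N+1:ℝ) + (1-r)⁻¹ ≤ (2*Λ + 1 + Real.exp Λ) * (1/lam) := by
      have expand : (2*Λ + 1 + Real.exp Λ) * (1/lam) = 2*Λ/lam + 1/lam + Real.exp Λ/lam := by
        ring
      rw [expand]
      linarith only [hN_le, hinv, e1]
    refine htsum_f_le.trans ?_
    linarith only [e2]
  have hlam_eq : 1/lam = (2*C₁)^(-(1/α)) * t ^ (-(1/α)) := by
    rw [hlamdef, show (2*t*C₁ : ℝ) = (2*C₁)*t by ring,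
      Real.mul_rpow (by positivity) ht0.le, Real.rpow_neg (by positivity),
      Real.rpow_neg ht0.le, one_div, mul_inv]
  have htpowα : (0:ℝ) < t ^ (-(1/α)) := Real.rpow_pos_of_pos ht0 _
  have hQt : Q t = (1/(4*Real.pi^2)) * ∑' n : ℤ, f n := hQ t ht0
  have hupper : Q t ≤ (c₁ + c₂) * t ^ (-(1/α)) := by
    rw [hQt]
    have h1 : (1/(4*Real.pi^2)) * (∑' n : ℤ, f n)
        ≤ (1/(4*Real.pi^2)) * (2 * ((2*Λ + 1 + Real.exp Λ) * (1/lam))) :=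
      mul_le_mul_of_nonneg_left hmain_upper hπ.le
    have h2 : (1/(4*Real.pi^2)) * (2 * ((2*Λ + 1 + Real.exp Λ) * (1/lam)))
        = c₂ * t ^ (-(1/α)) := by
      rw [hlam_eq, hc₂def]; ring
    have h3 : c₂ * t ^ (-(1/α)) ≤ (c₁ + c₂) * t ^ (-(1/α)) := by nlinarith
    linarith
  -- lower bound
  set x : ℝ := (2*t*C₂) ^ (-(1/β)) with hxdef
  clear_value x
  have hx0 : 0 < x := by rw [hxdef]; exact Real.rpow_pos_of_pos (by positivity) _
  set Nl : ℕ := max 1 ⌊x⌋₊ with hNldef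
  clear_value Nl
  have hNl1 : 1 ≤ Nl := by rw [hNldef]; exact le_max_left _ _
  have hNl_bound : 2*t*C₂ * (Nl:ℝ) ^ β ≤ M := by
    rcases le_or_gt 1 x with hx1 | hx1
    · have hfl : 1 ≤ ⌊x⌋₊ := Nat.le_floor (by exact_mod_cast hx1)
      have hNlx : (Nl:ℝ) ≤ x := by
        have hmax : Nl = ⌊x⌋₊ := by rw [hNldef]; exact max_eq_right hfl
        rw [hmax]; exact Nat.floor_le hx0.le
      have hpow : (Nl:ℝ) ^ β ≤ x ^ β := Real.rpow_le_rpow (by positivity) hNlx hβ0.le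
      have hxβ : x ^ β = (2*t*C₂)⁻¹ := by
        rw [hxdef, ← Real.rpow_mul (by positivity : (0:ℝ) ≤ 2*t*C₂),
          show -(1/β)*β = -1 by field_simp, Real.rpow_neg_one]
      calc 2*t*C₂*(Nl:ℝ)^β ≤ 2*t*C₂ * x^β :=
            mul_le_mul_of_nonneg_left hpow (by positivity)
        _ = 1 := by rw [hxβ]; field_simp
        _ ≤ M := by rw [hMdef]; exact le_max_left _ _
    · have hfl0 : ⌊x⌋₊ = 0 := Nat.floor_eq_zero.mpr hx1
      have hNl : Nl = 1 := by rw [hNldef, hfl0]; rfl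
      rw [hNl]
      have : ((1:ℕ):ℝ) ^ β = 1 := by norm_num
      rw [this]
      calc 2*t*C₂*1 = 2*t*C₂ := by ring
        _ ≤ 2*T*C₂ := by nlinarith
        _ ≤ M := by rw [hMdef]; exact le_max_right _ _
  have hNl_ge : x/2 ≤ (Nl:ℝ) := by
    rcases le_or_gt x 2 with h | h
    · have h1 : (1:ℝ) ≤ (Nl:ℝ) := by exact_mod_cast hNl1
      linarith
    · have h1 : x - 1 < (⌊x⌋₊:ℝ) := Nat.sub_one_lt_floor x
      have h2 : (⌊x⌋₊:ℝ) ≤ (Nl:ℝ) := by rw [hNldef]; exact_mod_cast le_max_right 1 ⌊x⌋₊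
      linarith
  have hterm : ∀ n ∈ Finset.Icc (1:ℤ) (Nl:ℤ), Real.exp (-M) ≤ f n := by
    intro n hn
    rw [Finset.mem_Icc] at hn
    have hn0 : (0:ℤ) < n := by omega
    have hb := (hbound n (Int.one_le_abs (by omega))).2
    have habs : |(n:ℝ)| = (n:ℝ) := abs_of_pos (by exact_mod_cast hn0)
    have hle : (n:ℝ) ≤ (Nl:ℝ) := by exact_mod_cast hn.2
    have h1 : |(n:ℝ)| ^ β ≤ (Nl:ℝ) ^ β := by
      rw [habs]
      exact Real.rpow_le_rpow (by exact_mod_cast hn0.le) hle hβ0.le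
    have h2 : 2*t*(Φ n).re ≤ M := by
      have hpowpos : (0:ℝ) ≤ |(n:ℝ)| ^ β := (Real.rpow_pos_of_pos (by rw [habs]; exact_mod_cast hn0) β).le
      calc 2*t*(Φ n).re ≤ 2*t*(C₂ * |(n:ℝ)|^β) := by nlinarith
        _ = 2*t*C₂ * |(n:ℝ)|^β := by ring
        _ ≤ 2*t*C₂ * (Nl:ℝ)^β := mul_le_mul_of_nonneg_left h1 (by positivity)
        _ ≤ M := hNl_bound
    rw [hfdef]
    exact Real.exp_le_exp.mpr (by linarith)
  have hcard : (Finset.Icc (1:ℤ) (Nl:ℤ)).card = Nl := by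
    rw [Int.card_Icc]; omega
  have hsum_lower : (Nl:ℝ) * Real.exp (-M) ≤ ∑ n ∈ Finset.Icc (1:ℤ) (Nl:ℤ), f n := by
    have h := Finset.card_nsmul_le_sum (Finset.Icc (1:ℤ) (Nl:ℤ)) f (Real.exp (-M)) hterm
    rw [hcard] at h
    simpa [nsmul_eq_mul] using h
  have hlow : c₁ * t ^ (-(1/β)) ≤ Q t := by
    rw [hQt]
    have h1 : ∑ n ∈ Finset.Icc (1:ℤ) (Nl:ℤ), f n ≤ ∑' n : ℤ, f n :=
      Summable.sum_le_tsum _ (fun n _ => (hfpos n).le) hf_sum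
    have hx_eq : x = (2*C₂)^(-(1/β)) * t ^ (-(1/β)) := by
      rw [hxdef, show (2*t*C₂:ℝ) = (2*C₂)*t by ring, Real.mul_rpow (by positivity) ht0.le]
    have h2 : x/2 * Real.exp (-M) ≤ ∑' n : ℤ, f n := by
      calc x/2 * Real.exp (-M) ≤ (Nl:ℝ) * Real.exp (-M) := by nlinarith [Real.exp_pos (-M)]
        _ ≤ _ := le_trans hsum_lower h1
    calc c₁ * t ^ (-(1/β)) = (1/(4*Real.pi^2)) * (x/2 * Real.exp (-M)) := by
          rw [hc₁def, hx_eq]; ring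
      _ ≤ (1/(4*Real.pi^2)) * ∑' n : ℤ, f n := mul_le_mul_of_nonneg_left h2 hπ.le
  exact ⟨hlow, hupper⟩
end
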